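/- arXiv:2412.19013 — 6 statements merged into one kernel-verified Lean document; each statement's English description precedes it below -/
import Mathlib

section
/- If R⁺(ρ, σ) < ∞, then for every subchannel discrimination strategy ({Ψ_i}, {M_i}) (subchannels Ψ_i completely positive trace-nonincreasing with ∑_i Ψ_i trace preserving, and {M_i} a POVM), the success probabilities satisfy ∑_i tr(M_i Ψ_i(ρ)) ≤ (1 + R⁺(ρ, σ)) · ∑_i tr(M_i Ψ_i(σ)). -/
open Matrix BigOperators ComplexOrder

/-- A density operator: positive semidefinite with unit trace. -/
def IsDensity {d : ℕ} (ρ : Matrix (Fin d) (Fin d) ℂ) : Prop :=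
  ρ.PosSemidef ∧ ρ.trace = 1

/-- Complete positivity of a linear map on matrices, via a Kraus representation. -/
def IsCP {d : ℕ} (Φ : Matrix (Fin d) (Fin d) ℂ →ₗ[ℂ] Matrix (Fin d) (Fin d) ℂ) : Prop :=
  ∃ (m : ℕ) (K : Fin m → Matrix (Fin d) (Fin d) ℂ),
    ∀ ρ, Φ ρ = ∑ j, K j * ρ * (K j)ᴴ

/-- Trace-nonincreasing on positive semidefinite inputs. -/
def TraceNonincreasing {d : ℕ}
    (Φ : Matrix (Fin d) (Fin d) ℂ →ₗ[ℂ] Matrix (Fin d) (Fin d) ℂ) : Prop :=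
  ∀ ρ : Matrix (Fin d) (Fin d) ℂ, ρ.PosSemidef → (Φ ρ).trace.re ≤ ρ.trace.re

/-- `(Ψ, M)` is a valid subchannel-discrimination strategy:
subchannels are CP trace-nonincreasing, sum to a trace-preserving map,
and `M` is a POVM. -/
def IsStrategy {d m : ℕ}
    (Ψ : Fin m → (Matrix (Fin d) (Fin d) ℂ →ₗ[ℂ] Matrix (Fin d) (Fin d) ℂ))
    (M : Fin m → Matrix (Fin d) (Fin d) ℂ) : Prop :=
  (∀ i, IsCP (Ψ i)) ∧ (∀ i, TraceNonincreasing (Ψ i)) ∧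
  (∀ τ : Matrix (Fin d) (Fin d) ℂ, ∑ i, ((Ψ i) τ).trace = τ.trace) ∧
  (∀ i, (M i).PosSemidef) ∧ (∑ i, M i = 1)

/-- Sum of PSD matrices is PSD. -/
lemma posSemidef_sum {n k : ℕ} (A : Fin k → Matrix (Fin n) (Fin n) ℂ)
    (h : ∀ j, (A j).PosSemidef) : (∑ j, A j).PosSemidef := by
  classical
  induction k with
  | zero => simpa using Matrix.PosSemidef.zero
  | succ k ih =>
    rw [Fin.sum_univ_succ]
    exact (h 0).add (ih (fun j => A j.succ) (fun j => h j.succ))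

lemma cp_posSemidef {n : ℕ} {Φ : Matrix (Fin n) (Fin n) ℂ →ₗ[ℂ] Matrix (Fin n) (Fin n) ℂ}
    (hΦ : IsCP Φ) {ρ : Matrix (Fin n) (Fin n) ℂ} (hρ : ρ.PosSemidef) :
    (Φ ρ).PosSemidef := by
  obtain ⟨k, K, hK⟩ := hΦ
  rw [hK]
  exact posSemidef_sum _ (fun j => hρ.mul_mul_conjTranspose_same (K j))

lemma trace_re_nonneg {n : ℕ} {A : Matrix (Fin n) (Fin n) ℂ} (hA : A.PosSemidef) :
    0 ≤ A.trace.re := by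
  rw [Matrix.trace, Complex.re_sum]
  refine Finset.sum_nonneg fun i _ => ?_
  have := hA.re_dotProduct_nonneg (Pi.single i 1)
  simpa [dotProduct, Matrix.mulVec, Pi.single_apply, Matrix.diag] using this

lemma mul_trace_re_nonneg {n : ℕ} {A B : Matrix (Fin n) (Fin n) ℂ}
    (hA : A.PosSemidef) (hB : B.PosSemidef) : 0 ≤ (A * B).trace.re := by
  open scoped MatrixOrder Matrix.Norms.L2Operator in
  obtain ⟨C, rfl⟩ := CStarAlgebra.nonneg_iff_eq_star_mul_self.mp hA.nonneg
  rw [Matrix.star_eq_conjTranspose]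
  have h1 : (Cᴴ * C * B).trace = (C * B * Cᴴ).trace :=
    (Matrix.trace_mul_cycle C B Cᴴ).symm
  rw [h1]
  exact trace_re_nonneg (hB.mul_mul_conjTranspose_same C)

theorem stmt5 {d m : ℕ} (ρ σ : Matrix (Fin d) (Fin d) ℂ)
    (hρ : IsDensity ρ) (hσ : IsDensity σ)
    (S : Set ℝ)
    (hS : S = {s : ℝ | 0 ≤ s ∧ ∃ τ, IsDensity τ ∧
        ρ + (s : ℂ) • τ = ((1 + s : ℝ) : ℂ) • σ})
    (hfin : S.Nonempty)
    (Ψ : Fin m → (Matrix (Fin d) (Fin d) ℂ →ₗ[ℂ] Matrix (Fin d) (Fin d) ℂ))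
    (M : Fin m → Matrix (Fin d) (Fin d) ℂ)
    (hstrat : IsStrategy Ψ M) :
    (∑ i, (M i * (Ψ i) ρ).trace).re
      ≤ (1 + sInf S) * (∑ i, (M i * (Ψ i) σ).trace).re := by
  obtain ⟨hCP, hTN, hTP, hPOVM, hsum⟩ := hstrat
  set Pρ := (∑ i, (M i * (Ψ i) ρ).trace).re with hPρ
  set c := (∑ i, (M i * (Ψ i) σ).trace).re with hc
  -- nonnegativity of success probabilities
  have key_nonneg : ∀ (A : Matrix (Fin d) (Fin d) ℂ), A.PosSemidef →
      0 ≤ (∑ i, (M i * (Ψ i) A).trace).re := by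
    intro A hA
    rw [Complex.re_sum]
    exact Finset.sum_nonneg fun i _ =>
      mul_trace_re_nonneg (hPOVM i) (cp_posSemidef (hCP i) hA)
  have hc0 : 0 ≤ c := key_nonneg σ hσ.1
  -- for each s ∈ S, Pρ ≤ (1+s) * c
  have hle : ∀ s ∈ S, Pρ ≤ (1 + s) * c := by
    intro s hs
    rw [hS] at hs
    obtain ⟨hs0, τ, hτ, heq⟩ := hs
    have hρeq : ρ = ((1 + s : ℝ) : ℂ) • σ - (s : ℂ) • τ := by
      rw [← heq]; abel
    have hPτ : 0 ≤ (∑ i, (M i * (Ψ i) τ).trace).re := key_nonneg τ hτ.1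
    have hterm : ∀ i, (M i * (Ψ i) ρ).trace
        = ((1 + s : ℝ) : ℂ) * (M i * (Ψ i) σ).trace - (s : ℂ) * (M i * (Ψ i) τ).trace := by
      intro i
      rw [hρeq, map_sub, LinearMap.map_smul, LinearMap.map_smul, Matrix.mul_sub, Matrix.mul_smul,
        Matrix.mul_smul, Matrix.trace_sub, Matrix.trace_smul, Matrix.trace_smul]
      simp [smul_eq_mul]
    have : Pρ = (1 + s) * c - s * (∑ i, (M i * (Ψ i) τ).trace).re := by
      rw [hPρ, hc]
      simp only [hterm, Finset.sum_sub_distrib, ← Finset.mul_sum]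
      rw [Complex.sub_re, Complex.re_ofReal_mul, Complex.re_ofReal_mul]
    rw [this]
    have : 0 ≤ s * (∑ i, (M i * (Ψ i) τ).trace).re := mul_nonneg hs0 hPτ
    linarith
  -- conclude
  rcases eq_or_lt_of_le hc0 with hc0' | hcpos
  · obtain ⟨s, hs⟩ := hfin
    have := hle s hs
    rw [← hc0'] at this ⊢
    simpa using this
  · have hbd : BddBelow S := by
      refine ⟨0, fun s hs => ?_⟩
      rw [hS] at hs; exact hs.1
    have hlb : (Pρ - c) / c ≤ sInf S := by
      apply le_csInf hfin
      intro s hs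
      have := hle s hs
      rw [div_le_iff₀ hcpos]
      nlinarith
    have : Pρ - c ≤ sInf S * c := by
      have := mul_le_mul_of_nonneg_right hlb (le_of_lt hcpos)
      rwa [div_mul_cancel₀ _ (ne_of_gt hcpos)] at this
    linarith
end

section
/- If ρ = |φ⟩⟨φ| is a pure state on C^d, then the maximal fidelity with maximally coherent states equals (1/d)(∑_i |⟨i|φ⟩|)², i.e. min over maximally coherent σ of (1 − F(σ, ρ)) = 1 − (1/d)(∑_i |⟨i|φ⟩|)². -/
open Matrix BigOperators ComplexOrder

/-- The maximally coherent state vector `(1/√d) ∑ i e^{iθ_i}|i⟩` with phases `θ`. -/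
noncomputable def mcVec (d : ℕ) (θ : Fin d → ℝ) : Fin d → ℂ :=
  fun i => (((Real.sqrt d)⁻¹ : ℝ) : ℂ) * Complex.exp (Complex.I * (θ i : ℂ))

/-- Maximal fidelity of `ρ` with maximally coherent states. -/
noncomputable def maxCohFid {d : ℕ} (ρ : Matrix (Fin d) (Fin d) ℂ) : ℝ :=
  sSup {r : ℝ | ∃ θ : Fin d → ℝ,
    r = (star (mcVec d θ) ⬝ᵥ ρ.mulVec (mcVec d θ)).re}

/-!
Up to the factor `d⁻¹`, the overlap `|⟨ψ_θ|φ⟩|²` is `|∑ i, e^{-iθ_i} φ_i|²`. By the triangle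
inequality this is at most `(∑ i, |φ_i|)²`, and choosing `θ_i = arg φ_i` rotates every summand
onto the positive real axis, where the triangle inequality is an equality.
-/

open Complex

section PhaseRotation

variable {ι : Type*} [Fintype ι]

lemma exp_neg_I_mul_arg_mul_self (z : ℂ) : exp (-(I * (arg z : ℂ))) * z = (‖z‖ : ℂ) := by
  conv_lhs => arg 2; rw [← norm_mul_exp_arg_mul_I z]
  rw [mul_left_comm, ← exp_add, show -(I * (arg z : ℂ)) + arg z * I = 0 by ring, exp_zero, mul_one]

lemma norm_sum_exp_neg_I_mul_le (θ : ι → ℝ) (φ : ι → ℂ) :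
    ‖∑ i, exp (-(I * (θ i : ℂ))) * φ i‖ ≤ ∑ i, ‖φ i‖ :=
  (norm_sum_le _ _).trans <| Finset.sum_le_sum fun i _ => by
    rw [norm_mul, ← mul_neg, ← ofReal_neg, norm_exp_I_mul_ofReal, one_mul]

lemma norm_sum_exp_neg_I_mul_arg (φ : ι → ℂ) :
    ‖∑ i, exp (-(I * (arg (φ i) : ℂ))) * φ i‖ = ∑ i, ‖φ i‖ := by
  simp_rw [exp_neg_I_mul_arg_mul_self, ← ofReal_sum, norm_real, Real.norm_eq_abs]
  exact abs_of_nonneg (Finset.sum_nonneg fun i _ => norm_nonneg _)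

end PhaseRotation

lemma norm_star_mcVec_dotProduct_sq {d : ℕ} (θ : Fin d → ℝ) (φ : Fin d → ℂ) :
    ‖star (mcVec d θ) ⬝ᵥ φ‖ ^ 2
      = (d : ℝ)⁻¹ * ‖∑ i, exp (-(I * (θ i : ℂ))) * φ i‖ ^ 2 := by
  have h : star (mcVec d θ) ⬝ᵥ φ
      = (((Real.sqrt d)⁻¹ : ℝ) : ℂ) * ∑ i, exp (-(I * (θ i : ℂ))) * φ i := by
    simp [dotProduct, mcVec, Finset.mul_sum, ← exp_conj, mul_comm, mul_assoc]
  rw [h, norm_mul, mul_pow, norm_real, Real.norm_eq_abs, abs_of_nonneg (by positivity),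
    ← Real.sqrt_inv, Real.sq_sqrt (by positivity)]

lemma isGreatest_norm_star_mcVec_dotProduct_sq {d : ℕ} (φ : Fin d → ℂ) :
    IsGreatest (Set.range fun θ => ‖star (mcVec d θ) ⬝ᵥ φ‖ ^ 2)
      ((d : ℝ)⁻¹ * (∑ i, ‖φ i‖) ^ 2) := by
  refine ⟨⟨fun i => arg (φ i), ?_⟩, ?_⟩
  · dsimp only
    rw [norm_star_mcVec_dotProduct_sq, norm_sum_exp_neg_I_mul_arg]
  · rintro _ ⟨θ, rfl⟩
    dsimp only
    rw [norm_star_mcVec_dotProduct_sq]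
    gcongr
    exact norm_sum_exp_neg_I_mul_le θ φ

theorem stmt8_general {d : ℕ} (φ : Fin d → ℂ) :
    sInf {r : ℝ | ∃ θ : Fin d → ℝ,
        r = 1 - ‖star (mcVec d θ) ⬝ᵥ φ‖ ^ 2}
      = 1 - (d : ℝ)⁻¹ * (∑ i, ‖φ i‖) ^ 2 := by
  obtain ⟨⟨θ₀, hθ₀⟩, hle⟩ := isGreatest_norm_star_mcVec_dotProduct_sq φ
  refine IsLeast.csInf_eq ⟨⟨θ₀, by rw [← hθ₀]⟩, ?_⟩
  rintro _ ⟨θ, rfl⟩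
  linarith [hle ⟨θ, rfl⟩]

theorem stmt8 {d : ℕ} (hd : 0 < d) (φ : Fin d → ℂ)
    (hφ : star φ ⬝ᵥ φ = 1) :
    sInf {r : ℝ | ∃ θ : Fin d → ℝ,
        r = 1 - ‖star (mcVec d θ) ⬝ᵥ φ‖ ^ 2}
      = 1 - (d : ℝ)⁻¹ * (∑ i, ‖φ i‖) ^ 2 :=
  stmt8_general φ
end

section
/- Let σ = |φ⟩⟨φ| be a pure state and ({Ψ_i},{M_i}) any strategy with P_succ({Ψ_i},{M_i},σ) = 1. Then for every density operator ρ, P_succ({Ψ_i},{M_i},ρ) ≥ ⟨φ|ρ|φ⟩ = F(σ,ρ). -/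
open Matrix BigOperators ComplexOrder

section AuxLemmas

variable {d : ℕ}

private lemma trace_mul_vecMulVec' (A : Matrix (Fin d) (Fin d) ℂ) (x y : Fin d → ℂ) :
    (A * vecMulVec x (star y)).trace = star y ⬝ᵥ A *ᵥ x := by
  simp only [Matrix.trace, Matrix.diag_apply, Matrix.mul_apply, vecMulVec_apply,
    dotProduct, mulVec, Pi.star_apply, Finset.mul_sum]
  exact Finset.sum_congr rfl fun k _ => Finset.sum_congr rfl fun l _ => by ring

private lemma conj_vecMulVec' (K : Matrix (Fin d) (Fin d) ℂ) (x y : Fin d → ℂ) :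
    K * vecMulVec x (star y) * Kᴴ = vecMulVec (K *ᵥ x) (star (K *ᵥ y)) := by
  ext a b
  simp only [Matrix.mul_apply, vecMulVec_apply, mulVec, dotProduct, Pi.star_apply,
    conjTranspose_apply, Finset.sum_mul, Finset.mul_sum, star_sum, star_mul']
  exact Finset.sum_congr rfl fun k _ => Finset.sum_congr rfl fun l _ => by ring

private lemma dot_eq_inner' (a b : Fin d → ℂ) :
    star a ⬝ᵥ b = @inner ℂ (EuclideanSpace ℂ (Fin d)) _ (WithLp.toLp 2 a) (WithLp.toLp 2 b) := by
  simp [PiLp.inner_apply, dotProduct, RCLike.inner_apply, mul_comm]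

private lemma cs_dot' (a b : Fin d → ℂ) :
    ‖star a ⬝ᵥ b‖ ^ 2 ≤ (star a ⬝ᵥ a).re * (star b ⬝ᵥ b).re := by
  let a' : EuclideanSpace ℂ (Fin d) := WithLp.toLp 2 a
  let b' : EuclideanSpace ℂ (Fin d) := WithLp.toLp 2 b
  have h1 : star a ⬝ᵥ b = @inner ℂ (EuclideanSpace ℂ (Fin d)) _ a' b' := dot_eq_inner' a b
  have h2 : (star a ⬝ᵥ a).re = ‖a'‖ ^ 2 := by
    rw [dot_eq_inner' a a, ← inner_self_eq_norm_sq (𝕜 := ℂ) a']; rfl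
  have h3 : (star b ⬝ᵥ b).re = ‖b'‖ ^ 2 := by
    rw [dot_eq_inner' b b, ← inner_self_eq_norm_sq (𝕜 := ℂ) b']; rfl
  rw [h1, h2, h3]
  calc ‖@inner ℂ (EuclideanSpace ℂ (Fin d)) _ a' b'‖ ^ 2
      ≤ (‖a'‖ * ‖b'‖) ^ 2 :=
        pow_le_pow_left₀ (norm_nonneg _) (norm_inner_le_norm (𝕜 := ℂ) a' b') 2
    _ = ‖a'‖ ^ 2 * ‖b'‖ ^ 2 := by ring

open scoped MatrixOrder in
private lemma psd_decomp' {A : Matrix (Fin d) (Fin d) ℂ} (hA : A.PosSemidef) :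
    ∃ B : Matrix (Fin d) (Fin d) ℂ, A = Bᴴ * B :=
  ⟨CFC.sqrt A, by
    rw [(CFC.sqrt_nonneg A).posSemidef.1.eq]
    exact (CFC.sqrt_mul_sqrt_self A hA.nonneg).symm⟩

private lemma psd_cs' {A : Matrix (Fin d) (Fin d) ℂ} (hA : A.PosSemidef) (x y : Fin d → ℂ) :
    ‖star x ⬝ᵥ A *ᵥ y‖ ^ 2 ≤ (star x ⬝ᵥ A *ᵥ x).re * (star y ⬝ᵥ A *ᵥ y).re := by
  obtain ⟨B, rfl⟩ := psd_decomp' hA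
  have key : ∀ u v : Fin d → ℂ, star u ⬝ᵥ (Bᴴ * B) *ᵥ v = star (B *ᵥ u) ⬝ᵥ (B *ᵥ v) := by
    intro u v
    rw [star_mulVec, ← mulVec_mulVec, dotProduct_mulVec]
  rw [key x y, key x x, key y y]
  exact cs_dot' _ _

private lemma dot_vecMulVec_dot' (x y f : Fin d → ℂ) :
    star f ⬝ᵥ (vecMulVec x (star y)) *ᵥ f = (star f ⬝ᵥ x) * (star y ⬝ᵥ f) := by
  simp only [dotProduct, mulVec, vecMulVec_apply, Pi.star_apply, Finset.mul_sum,
    Finset.sum_mul]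
  rw [Finset.sum_comm]
  exact Finset.sum_congr rfl fun k _ => Finset.sum_congr rfl fun l _ => by ring

private lemma dot_conj' (x y : Fin d → ℂ) : star x ⬝ᵥ y = starRingEnd ℂ (star y ⬝ᵥ x) := by
  simp [dotProduct, map_sum, mul_comm]

private lemma sum_mulVec' {ι : Type*} (s : Finset ι) (A : ι → Matrix (Fin d) (Fin d) ℂ)
    (x : Fin d → ℂ) : (∑ c ∈ s, A c) *ᵥ x = ∑ c ∈ s, A c *ᵥ x := by
  ext k
  simp only [mulVec, dotProduct, Matrix.sum_apply, Finset.sum_apply, Finset.sum_mul]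
  rw [Finset.sum_comm]

private lemma dotProduct_sum' {ι : Type*} (s : Finset ι) (v : Fin d → ℂ)
    (w : ι → Fin d → ℂ) : v ⬝ᵥ (∑ c ∈ s, w c) = ∑ c ∈ s, v ⬝ᵥ w c := by
  simp only [dotProduct, Finset.sum_apply, Finset.mul_sum]
  rw [Finset.sum_comm]

end AuxLemmas

theorem stmt14 {d m : ℕ} (φ : Fin d → ℂ) (hφ : star φ ⬝ᵥ φ = 1)
    (Ψ : Fin m → (Matrix (Fin d) (Fin d) ℂ →ₗ[ℂ] Matrix (Fin d) (Fin d) ℂ))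
    (M : Fin m → Matrix (Fin d) (Fin d) ℂ)
    (hstrat : IsStrategy Ψ M)
    (hsucc : (∑ i, (M i * (Ψ i) (vecMulVec φ (star φ))).trace) = 1) :
    ∀ ρ : Matrix (Fin d) (Fin d) ℂ, IsDensity ρ →
      (∑ i, (M i * (Ψ i) ρ).trace).re ≥ (star φ ⬝ᵥ ρ.mulVec φ).re := by
  obtain ⟨hCP, hTNI, hTP, hMpsd, hMsum⟩ := hstrat
  choose n K hK using hCP
  intro ρ hρ
  obtain ⟨hρpsd, hρtr⟩ := hρ
  obtain ⟨B, hB⟩ := psd_decomp' hρpsd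
  set σ : Matrix (Fin d) (Fin d) ℂ := vecMulVec φ (star φ) with hσ
  set b : Fin d → Fin d → ℂ := fun c k => star (B c k) with hbdef
  have hρdec : ρ = ∑ c, vecMulVec (b c) (star (b c)) := by
    rw [hB]; ext k l
    simp [Matrix.sum_apply, vecMulVec_apply, Matrix.mul_apply, conjTranspose_apply,
      hbdef, mul_comm]
  -- basic consequences of the Kraus representation
  have hPsi : ∀ (i) (x y : Fin d → ℂ),
      Ψ i (vecMulVec x (star y)) = ∑ j, vecMulVec (K i j *ᵥ x) (star (K i j *ᵥ y)) := by
    intro i x y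
    rw [hK i]
    exact Finset.sum_congr rfl fun j _ => conj_vecMulVec' _ _ _
  have htr : ∀ (i) (A : Matrix (Fin d) (Fin d) ℂ) (x y : Fin d → ℂ),
      (A * Ψ i (vecMulVec x (star y))).trace
        = ∑ j, star (K i j *ᵥ y) ⬝ᵥ A *ᵥ (K i j *ᵥ x) := by
    intro i A x y
    rw [hPsi, Finset.mul_sum, trace_sum]
    exact Finset.sum_congr rfl fun j _ => trace_mul_vecMulVec' _ _ _
  have htrV : ∀ x y : Fin d → ℂ, (vecMulVec x (star y)).trace = star y ⬝ᵥ x := by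
    intro x y
    simpa using trace_mul_vecMulVec' (1 : Matrix (Fin d) (Fin d) ℂ) x y
  have hTP' : ∀ x y : Fin d → ℂ,
      (∑ i, ∑ j, star (K i j *ᵥ y) ⬝ᵥ (K i j *ᵥ x)) = star y ⬝ᵥ x := by
    intro x y
    have h := hTP (vecMulVec x (star y))
    rw [htrV] at h
    rw [← h]
    refine Finset.sum_congr rfl fun i _ => ?_
    rw [hPsi, trace_sum]
    exact Finset.sum_congr rfl fun j _ => (htrV _ _).symm
  -- each effect is dominated by the identity
  have hMle : ∀ i, (1 - M i).PosSemidef := by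
    intro i
    have e : (1 : Matrix (Fin d) (Fin d) ℂ) - M i = ∑ j ∈ Finset.univ.erase i, M j := by
      rw [← hMsum, Finset.sum_erase_eq_sub (Finset.mem_univ i)]
    rw [e]
    exact Finset.sum_induction _ _ (fun a b ha hb => ha.add hb) Matrix.PosSemidef.zero
      (fun j _ => hMpsd j)
  -- success probability 1 forces M i to fix every Kraus vector K i j *ᵥ φ
  have hsumσ : ∑ i, (Ψ i σ).trace = 1 := by
    rw [hTP σ, hσ, htrV, hφ]
  have hzero : ∑ i, ∑ j, star (K i j *ᵥ φ) ⬝ᵥ (1 - M i) *ᵥ (K i j *ᵥ φ) = 0 := by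
    have h1 : ∀ i, ∑ j, star (K i j *ᵥ φ) ⬝ᵥ (1 - M i) *ᵥ (K i j *ᵥ φ)
        = ((1 - M i) * Ψ i σ).trace := fun i => (htr i (1 - M i) φ φ).symm
    calc ∑ i, ∑ j, star (K i j *ᵥ φ) ⬝ᵥ (1 - M i) *ᵥ (K i j *ᵥ φ)
        = ∑ i, ((1 - M i) * Ψ i σ).trace := Finset.sum_congr rfl fun i _ => h1 i
      _ = ∑ i, ((Ψ i σ).trace - (M i * Ψ i σ).trace) := by
          refine Finset.sum_congr rfl fun i _ => ?_
          rw [Matrix.sub_mul, Matrix.one_mul, trace_sub]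
      _ = 0 := by rw [Finset.sum_sub_distrib, hsumσ, hsucc, sub_self]
  have hterm0 : ∀ i j, star (K i j *ᵥ φ) ⬝ᵥ (1 - M i) *ᵥ (K i j *ᵥ φ) = 0 := by
    intro i j
    have hnn : ∀ (p : Fin m) (q : Fin (n p)),
        0 ≤ star (K p q *ᵥ φ) ⬝ᵥ (1 - M p) *ᵥ (K p q *ᵥ φ) := fun p q => (hMle p).dotProduct_mulVec_nonneg _
    have houter : ∀ p ∈ Finset.univ,
        (0:ℂ) ≤ ∑ q, star (K p q *ᵥ φ) ⬝ᵥ (1 - M p) *ᵥ (K p q *ᵥ φ) :=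
      fun p _ => Finset.sum_nonneg fun q _ => hnn p q
    have hi := (Finset.sum_eq_zero_iff_of_nonneg houter).mp hzero i (Finset.mem_univ i)
    exact (Finset.sum_eq_zero_iff_of_nonneg fun q _ => hnn i q).mp hi j (Finset.mem_univ j)
  have hfix : ∀ i j, M i *ᵥ (K i j *ᵥ φ) = K i j *ᵥ φ := by
    intro i j
    have h0 := ((hMle i).dotProduct_mulVec_zero_iff _).mp (hterm0 i j)
    rwa [Matrix.sub_mulVec, Matrix.one_mulVec, sub_eq_zero, eq_comm] at h0
  have hvM : ∀ i j, star (K i j *ᵥ φ) ᵥ* (M i) = star (K i j *ᵥ φ) := by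
    intro i j
    conv_lhs => rw [← (hMpsd i).1]
    rw [← star_mulVec, hfix i j]
  -- real quantities
  set p : (Σ i : Fin m, Fin (n i)) → ℝ :=
    fun t => (star (K t.1 t.2 *ᵥ φ) ⬝ᵥ (K t.1 t.2 *ᵥ φ)).re with hpdef
  set q : (Σ i : Fin m, Fin (n i)) → Fin d → ℝ :=
    fun t c => (star (K t.1 t.2 *ᵥ b c) ⬝ᵥ (M t.1) *ᵥ (K t.1 t.2 *ᵥ b c)).re with hqdef
  have hp0 : ∀ t, 0 ≤ p t := fun t => (Complex.le_def.mp (dotProduct_star_self_nonneg _)).1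
  have hq0 : ∀ t c, 0 ≤ q t c := fun t c => (Complex.le_def.mp ((hMpsd t.1).dotProduct_mulVec_nonneg _)).1
  have hpsum : ∑ t : (Σ i : Fin m, Fin (n i)), p t = 1 := by
    have := congrArg Complex.re (hTP' φ φ)
    rw [hφ, Complex.re_sum] at this
    simp only [Complex.re_sum] at this
    rw [← Finset.univ_sigma_univ, Finset.sum_sigma]
    exact this.trans rfl
  -- the key per-column inequality
  have hkey : ∀ c, ‖star φ ⬝ᵥ b c‖ ^ 2 ≤ ∑ t : (Σ i : Fin m, Fin (n i)), q t c := by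
    intro c
    have hz : star φ ⬝ᵥ b c
        = ∑ t : (Σ i : Fin m, Fin (n i)),
            star (K t.1 t.2 *ᵥ φ) ⬝ᵥ (M t.1) *ᵥ (K t.1 t.2 *ᵥ b c) := by
      rw [← hTP' (b c) φ, ← Finset.univ_sigma_univ, Finset.sum_sigma]
      refine Finset.sum_congr rfl fun i _ => Finset.sum_congr rfl fun j _ => ?_
      dsimp only
      conv_rhs => rw [dotProduct_mulVec, hvM i j]
    have hterm : ∀ t : (Σ i : Fin m, Fin (n i)),
        ‖star (K t.1 t.2 *ᵥ φ) ⬝ᵥ (M t.1) *ᵥ (K t.1 t.2 *ᵥ b c)‖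
          ≤ Real.sqrt (p t) * Real.sqrt (q t c) := by
      intro t
      have h1 := psd_cs' (hMpsd t.1) (K t.1 t.2 *ᵥ φ) (K t.1 t.2 *ᵥ b c)
      rw [hfix t.1 t.2] at h1
      have h2 : ‖star (K t.1 t.2 *ᵥ φ) ⬝ᵥ (M t.1) *ᵥ (K t.1 t.2 *ᵥ b c)‖
          ≤ Real.sqrt (p t * q t c) := by
        rw [← Real.sqrt_sq (norm_nonneg _)]
        exact Real.sqrt_le_sqrt h1
      rwa [Real.sqrt_mul (hp0 t)] at h2
    have hzb : ‖star φ ⬝ᵥ b c‖ ≤ ∑ t : (Σ i : Fin m, Fin (n i)),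
        Real.sqrt (p t) * Real.sqrt (q t c) := by
      rw [hz]
      exact (norm_sum_le _ _).trans (Finset.sum_le_sum fun t _ => hterm t)
    calc ‖star φ ⬝ᵥ b c‖ ^ 2
        ≤ (∑ t : (Σ i : Fin m, Fin (n i)), Real.sqrt (p t) * Real.sqrt (q t c)) ^ 2 :=
          pow_le_pow_left₀ (norm_nonneg _) hzb 2
      _ ≤ (∑ t : (Σ i : Fin m, Fin (n i)), p t) * ∑ t : (Σ i : Fin m, Fin (n i)), q t c :=
          Finset.sum_sq_le_sum_mul_sum_of_sq_eq_mul _ (fun t _ => hp0 t) (fun t _ => hq0 t c)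
            (fun t _ => by rw [mul_pow, Real.sq_sqrt (hp0 t), Real.sq_sqrt (hq0 t c)])
      _ = ∑ t : (Σ i : Fin m, Fin (n i)), q t c := by rw [hpsum, one_mul]
  -- rewrite both sides
  have hLHS : (∑ i, (M i * (Ψ i) ρ).trace).re
      = ∑ c, ∑ t : (Σ i : Fin m, Fin (n i)), q t c := by
    have hstep : ∀ i, (M i * Ψ i ρ).trace
        = ∑ c, ∑ j, star (K i j *ᵥ b c) ⬝ᵥ (M i) *ᵥ (K i j *ᵥ b c) := by
      intro i
      calc (M i * Ψ i ρ).trace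
          = ∑ c, (M i * Ψ i (vecMulVec (b c) (star (b c)))).trace := by
            rw [hρdec, map_sum, Finset.mul_sum, trace_sum]
        _ = _ := Finset.sum_congr rfl fun c _ => htr i (M i) (b c) (b c)
    rw [Complex.re_sum]
    calc ∑ i, ((M i * Ψ i ρ).trace).re
        = ∑ i, ∑ c, ∑ j, q ⟨i, j⟩ c := by
          refine Finset.sum_congr rfl fun i _ => ?_
          rw [hstep i, Complex.re_sum]
          exact Finset.sum_congr rfl fun c _ => by rw [Complex.re_sum]
      _ = ∑ c, ∑ i, ∑ j, q ⟨i, j⟩ c := Finset.sum_comm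
      _ = ∑ c, ∑ t : (Σ i : Fin m, Fin (n i)), q t c := by
          refine Finset.sum_congr rfl fun c _ => ?_
          rw [← Finset.univ_sigma_univ, Finset.sum_sigma]
  have hRHS : (star φ ⬝ᵥ ρ.mulVec φ).re = ∑ c, ‖star φ ⬝ᵥ b c‖ ^ 2 := by
    have h1 : star φ ⬝ᵥ ρ.mulVec φ
        = ∑ c, (star φ ⬝ᵥ b c) * (star (b c) ⬝ᵥ φ) := by
      rw [hρdec, sum_mulVec', dotProduct_sum']
      exact Finset.sum_congr rfl fun c _ => dot_vecMulVec_dot' _ _ _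
    rw [h1, Complex.re_sum]
    refine Finset.sum_congr rfl fun c _ => ?_
    rw [dot_conj' (b c) φ, Complex.mul_conj]
    simp [Complex.normSq_eq_norm_sq, ← Complex.ofReal_pow]
  rw [ge_iff_le, hRHS, hLHS]
  exact Finset.sum_le_sum fun c _ => hkey c
end

section
/- For any pure state σ = |φ⟩⟨φ| on C^d and any probability distribution (p_i), the strategy with subchannels Ψ_i(τ) = p_i U_i τ U_i† (where U_i are unitaries with U_i|φ⟩ = |φ_i⟩ for some orthonormal basis {|φ_i⟩}) and measurements M_i = |φ_i⟩⟨φ_i| achieves P_succ({Ψ_i},{M_i},σ) = 1, and for any density operator ρ it achieves P_succ({Ψ_i},{M_i},ρ) = ⟨φ|ρ|φ⟩. -/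
open Matrix BigOperators ComplexOrder

lemma tr_vecMulVec_mul {d : ℕ} (a : Fin d → ℂ) (B : Matrix (Fin d) (Fin d) ℂ) :
    (Matrix.vecMulVec a (star a) * B).trace = star a ⬝ᵥ B.mulVec a := by
  simp only [Matrix.trace, Matrix.diag, Matrix.mul_apply, Matrix.vecMulVec_apply,
    dotProduct, Matrix.mulVec, Pi.star_apply]
  rw [Finset.sum_comm]
  refine Finset.sum_congr rfl fun k _ => ?_
  rw [Finset.mul_sum]
  refine Finset.sum_congr rfl fun j _ => ?_
  ring

theorem stmt15 {d : ℕ} (φ : Fin d → ℂ) (hφ : star φ ⬝ᵥ φ = 1)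
    (b : Fin d → (Fin d → ℂ))
    (hb : ∀ i j, star (b i) ⬝ᵥ b j = if i = j then 1 else 0)
    (U : Fin d → Matrix (Fin d) (Fin d) ℂ)
    (hU : ∀ i, U i ∈ Matrix.unitaryGroup (Fin d) ℂ)
    (hUφ : ∀ i, (U i).mulVec φ = b i)
    (p : Fin d → ℝ) (hp : ∀ i, 0 ≤ p i) (hp1 : ∑ i, p i = 1)
    (Ψ : Fin d → (Matrix (Fin d) (Fin d) ℂ →ₗ[ℂ] Matrix (Fin d) (Fin d) ℂ))
    (hΨ : ∀ i τ, (Ψ i) τ = ((p i : ℝ) : ℂ) • (U i * τ * (U i)ᴴ))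
    (M : Fin d → Matrix (Fin d) (Fin d) ℂ)
    (hM : ∀ i, M i = vecMulVec (b i) (star (b i))) :
    IsStrategy Ψ M ∧
    (∑ i, (M i * (Ψ i) (vecMulVec φ (star φ))).trace) = 1 ∧
    (∀ ρ : Matrix (Fin d) (Fin d) ℂ, IsDensity ρ →
      ∑ i, (M i * (Ψ i) ρ).trace = star φ ⬝ᵥ ρ.mulVec φ) := by
  -- unitarity facts
  have hUU : ∀ i, (U i)ᴴ * U i = 1 := fun i => by
    have := (hU i).1
    rwa [Matrix.star_eq_conjTranspose] at this
  have hUUc : ∀ i, U i * (U i)ᴴ = 1 := fun i => by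
    have := (hU i).2
    rwa [Matrix.star_eq_conjTranspose] at this
  -- trace of Ψ i τ
  have htr : ∀ i (τ : Matrix (Fin d) (Fin d) ℂ), ((Ψ i) τ).trace = ((p i : ℝ) : ℂ) * τ.trace := by
    intro i τ
    rw [hΨ, Matrix.trace_smul, Matrix.trace_mul_cycle, hUU, Matrix.one_mul, smul_eq_mul]
  -- key computation of each success term
  have key : ∀ i (ρ : Matrix (Fin d) (Fin d) ℂ),
      (M i * (Ψ i) ρ).trace = ((p i : ℝ) : ℂ) * (star φ ⬝ᵥ ρ.mulVec φ) := by
    intro i ρ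
    rw [hΨ, hM, Matrix.mul_smul, Matrix.trace_smul, tr_vecMulVec_mul, smul_eq_mul]
    congr 1
    have h1 : (U i)ᴴ.mulVec (b i) = φ := by
      rw [← hUφ i, Matrix.mulVec_mulVec, hUU, Matrix.one_mulVec]
    have h2 : star (b i) ᵥ* U i = star φ := by
      rw [← h1, Matrix.star_mulVec, Matrix.conjTranspose_conjTranspose]
    rw [Matrix.mul_assoc, ← Matrix.mulVec_mulVec, Matrix.dotProduct_mulVec, h2]
    congr 1
    rw [← Matrix.mulVec_mulVec, h1]
  -- sum of success terms for arbitrary ρ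
  have keysum : ∀ ρ : Matrix (Fin d) (Fin d) ℂ,
      ∑ i, (M i * (Ψ i) ρ).trace = star φ ⬝ᵥ ρ.mulVec φ := by
    intro ρ
    simp only [key]
    rw [← Finset.sum_mul]
    norm_cast
    rw [hp1, Complex.ofReal_one, one_mul]
  refine ⟨⟨?_, ?_, ?_, ?_, ?_⟩, ?_, fun ρ _ => keysum ρ⟩
  · -- CP
    intro i
    refine ⟨1, fun _ => (Real.sqrt (p i) : ℂ) • U i, fun ρ => ?_⟩
    rw [hΨ, Fin.sum_univ_one]
    rw [Matrix.conjTranspose_smul, Matrix.smul_mul, Matrix.mul_smul, Matrix.smul_mul,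
      smul_smul]
    congr 1
    rw [Complex.star_def, Complex.conj_ofReal, ← Complex.ofReal_mul,
      Real.mul_self_sqrt (hp i)]
  · -- trace nonincreasing
    intro i ρ hρ
    rw [htr]
    have h0 : 0 ≤ ρ.trace.re := by
      have : (0 : ℂ) ≤ ρ.trace := by
        have : ρ.trace = ∑ j, ρ j j := rfl
        rw [this]
        refine Finset.sum_nonneg fun j _ => ?_
        exact hρ.diag_nonneg
      exact_mod_cast (Complex.le_def.mp this).1
    have hpi1 : p i ≤ 1 := by
      rw [← hp1]
      exact Finset.single_le_sum (fun j _ => hp j) (Finset.mem_univ i)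
    calc (((p i : ℝ) : ℂ) * ρ.trace).re = p i * ρ.trace.re := by
          rw [Complex.mul_re]; simp
      _ ≤ 1 * ρ.trace.re := mul_le_mul_of_nonneg_right hpi1 h0
      _ = ρ.trace.re := one_mul _
  · -- trace preserving in sum
    intro τ
    simp only [htr]
    rw [← Finset.sum_mul]
    norm_cast
    rw [hp1, Complex.ofReal_one, one_mul]
  · -- POVM elements PSD
    intro i
    rw [hM, Matrix.vecMulVec_eq Unit, ← Matrix.conjTranspose_replicateCol]
    exact Matrix.posSemidef_self_mul_conjTranspose _
  · -- POVM sums to 1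
    have hA : (Matrix.of fun i j => star (b i j)) * (Matrix.of fun i j => star (b i j))ᴴ
        = (1 : Matrix (Fin d) (Fin d) ℂ) := by
      ext i j
      have := hb i j
      simpa [Matrix.mul_apply, dotProduct, Matrix.one_apply, mul_comm] using this
    have hA' := mul_eq_one_comm.mp hA
    ext j k
    have := congrArg (fun m => m j k) hA'
    simp only [Matrix.mul_apply, Matrix.conjTranspose_apply, Matrix.of_apply,
      star_star] at this
    simpa [hM, Matrix.sum_apply, Matrix.vecMulVec_apply, mul_comm] using this
  · -- success probability on the pure state
    rw [keysum]
    have hvec : (vecMulVec φ (star φ)).mulVec φ = φ := by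
      ext k
      have h1 : (∑ j, star φ j * φ j) = 1 := hφ
      simp only [Matrix.mulVec, dotProduct, Matrix.vecMulVec_apply, Pi.star_apply]
      calc ∑ j, φ k * star φ j * φ j = φ k * ∑ j, star φ j * φ j := by
            rw [Finset.mul_sum]
            exact Finset.sum_congr rfl fun j _ => mul_assoc _ _ _
        _ = φ k := by rw [h1, mul_one]
    rw [hvec, hφ]
end

section
/- For any density operator ρ, the min over strategies ({Ψ_i},{M_i}) with P_succ on a pure state σ = |φ⟩⟨φ| equal to 1 of P_succ({Ψ_i},{M_i},ρ) equals the fidelity: min_{Ω_σ} ∑_i tr(M_i Ψ_i(ρ)) = ⟨φ|ρ|φ⟩, where Ω_σ = {({Ψ_i},{M_i}) : ∑_i tr(M_i Ψ_i(σ)) = 1}. -/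
open Matrix BigOperators ComplexOrder

/-! ### Auxiliary lemmas -/

section Aux

variable {d : ℕ}

lemma aux_trace_mul_vecMulVec (A : Matrix (Fin d) (Fin d) ℂ) (x y : Fin d → ℂ) :
    (A * vecMulVec x y).trace = y ⬝ᵥ A.mulVec x := by
  simp only [trace, diag, Matrix.mul_apply, vecMulVec_apply, mulVec, dotProduct,
    Finset.mul_sum]
  congr 1; ext i; congr 1; ext j; ring

lemma aux_psd_trace_re_nonneg {A : Matrix (Fin d) (Fin d) ℂ} (hA : A.PosSemidef) :
    0 ≤ A.trace.re := by
  rw [trace]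
  have h : ∀ i, 0 ≤ (A.diag i).re := by
    intro i
    have := hA.re_dotProduct_nonneg (Pi.single i 1)
    simpa [mulVec_single, dotProduct_single, Pi.single_apply, dotProduct] using this
  calc (0:ℝ) ≤ ∑ i, (A.diag i).re := Finset.sum_nonneg fun i _ => h i
    _ = (∑ i, A.diag i).re := by rw [Complex.re_sum]

lemma aux_psd_trace_mul_re_nonneg {A B : Matrix (Fin d) (Fin d) ℂ}
    (hA : A.PosSemidef) (hB : B.PosSemidef) : 0 ≤ (A * B).trace.re := by
  obtain ⟨C, rfl⟩ : ∃ C : Matrix (Fin d) (Fin d) ℂ, B = Cᴴ * C := by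
    open scoped MatrixOrder in
    exact CFC.exists_sqrt_of_isSelfAdjoint_of_quasispectrumRestricts hB.isHermitian (QuasispectrumRestricts.nnreal_of_nonneg hB.nonneg) |>.elim fun X ⟨hX, _, hXX⟩ => ⟨X, by rw [← hXX, ← Matrix.star_eq_conjTranspose, hX.star_eq]⟩
  have h1 : (A * (Cᴴ * C)).trace = (C * A * Cᴴ).trace := by
    rw [← Matrix.mul_assoc, Matrix.trace_mul_cycle]
  rw [h1]
  exact aux_psd_trace_re_nonneg (hA.mul_mul_conjTranspose_same C)

lemma aux_eq_one_of_trace_mul (A : Matrix (Fin d) (Fin d) ℂ)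
    (h : ∀ τ : Matrix (Fin d) (Fin d) ℂ, (A * τ).trace = τ.trace) : A = 1 := by
  ext i j
  have := h (Matrix.single j i 1)
  simp only [trace, diag, Matrix.mul_apply, Matrix.single, of_apply] at this
  rw [Finset.sum_comm] at this
  have l1 : (∑ y : Fin d, ∑ x : Fin d, A x y * if j = y ∧ i = x then 1 else 0) = A i j := by
    rw [Finset.sum_eq_single j]
    · rw [Finset.sum_eq_single i]
      · simp
      · intro b _ hb; simp [hb.symm]
      · simp
    · intro b _ hb
      apply Finset.sum_eq_zero; intro c _; simp [hb.symm]
    · simp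
  have l2 : (∑ x : Fin d, if j = x ∧ i = x then (1:ℂ) else 0)
      = (1:Matrix (Fin d) (Fin d) ℂ) i j := by
    rcases eq_or_ne i j with h'|h'
    · subst h'; simp [Matrix.one_apply]
    · rw [Finset.sum_eq_zero, Matrix.one_apply_ne h']
      intro c _
      rcases eq_or_ne j c with h2|h2
      · subst h2; simp [h']
      · simp [h2]
  rw [l1, l2] at this
  exact this

lemma aux_mul_vecMulVec (A : Matrix (Fin d) (Fin d) ℂ) (x y : Fin d → ℂ) :
    A * vecMulVec x y = vecMulVec (A *ᵥ x) y := by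
  ext i j
  simp only [Matrix.mul_apply, vecMulVec_apply, mulVec, dotProduct, Finset.sum_mul]
  congr 1; ext k; ring

lemma aux_vecMulVec_mul (A : Matrix (Fin d) (Fin d) ℂ) (x y : Fin d → ℂ) :
    vecMulVec x y * A = vecMulVec x (y ᵥ* A) := by
  ext i j
  simp only [Matrix.mul_apply, vecMulVec_apply, vecMul, dotProduct, Finset.mul_sum]
  congr 1; ext k; ring

lemma aux_vecMulVec_mulVec (x y z : Fin d → ℂ) :
    vecMulVec x y *ᵥ z = (y ⬝ᵥ z) • x := by
  ext i
  simp only [mulVec, dotProduct, vecMulVec_apply, Pi.smul_apply, smul_eq_mul,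
    Finset.sum_mul, Finset.mul_sum]
  congr 1; ext k; ring

lemma aux_proj_conjTranspose (x : Fin d → ℂ) :
    (vecMulVec x (star x))ᴴ = vecMulVec x (star x) := by
  ext i j
  simp only [conjTranspose_apply, vecMulVec_apply, Pi.star_apply, star_mul', star_star]
  ring

lemma aux_key_QFQ {F : Matrix (Fin d) (Fin d) ℂ} {φ : Fin d → ℂ}
    (hF : F.IsHermitian) (hFφ : F *ᵥ φ = φ) (hφ : star φ ⬝ᵥ φ = 1) :
    (1 - vecMulVec φ (star φ)) * F * (1 - vecMulVec φ (star φ))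
      = F - vecMulVec φ (star φ) := by
  set P := vecMulVec φ (star φ) with hP
  have hFP : F * P = P := by rw [hP, aux_mul_vecMulVec, hFφ]
  have hsφ : star φ ᵥ* F = star φ := by
    have h2 : star (F *ᵥ φ) = star φ ᵥ* Fᴴ := Matrix.star_mulVec F φ
    rw [hFφ, hF.eq] at h2
    exact h2.symm
  have hPF : P * F = P := by rw [hP, aux_vecMulVec_mul, hsφ]
  have hPP : P * P = P := by
    rw [hP, aux_mul_vecMulVec, aux_vecMulVec_mulVec, hφ, one_smul]
  have e1 : (1 - P) * F = F - P := by rw [Matrix.sub_mul, Matrix.one_mul, hPF]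
  rw [e1, Matrix.sub_mul, Matrix.mul_sub, Matrix.mul_sub, Matrix.mul_one, Matrix.mul_one,
    hFP, hPP]
  abel

lemma aux_psd_sum {ι : Type*} (s : Finset ι) (f : ι → Matrix (Fin d) (Fin d) ℂ)
    (h : ∀ i ∈ s, (f i).PosSemidef) : (∑ i ∈ s, f i).PosSemidef := by
  classical
  induction s using Finset.induction_on with
  | empty => simpa using (Matrix.PosSemidef.zero (n := Fin d) (R := ℂ))
  | insert a s hnot ih =>
    rw [Finset.sum_insert hnot]
    exact (h _ (Finset.mem_insert_self _ _)).add
      (ih fun i hi => h i (Finset.mem_insert_of_mem hi))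

/-- The lower bound: any perfectly-σ-detecting strategy succeeds on `ρ` with
probability at least `⟨φ|ρ|φ⟩`. -/
lemma aux_lower_bound {d m : ℕ} (φ : Fin d → ℂ) (hφ : star φ ⬝ᵥ φ = 1)
    (ρ : Matrix (Fin d) (Fin d) ℂ) (hρ : IsDensity ρ)
    (Ψ : Fin m → (Matrix (Fin d) (Fin d) ℂ →ₗ[ℂ] Matrix (Fin d) (Fin d) ℂ))
    (M : Fin m → Matrix (Fin d) (Fin d) ℂ)
    (hS : IsStrategy Ψ M)
    (hσ : (∑ i, (M i * (Ψ i) (vecMulVec φ (star φ))).trace) = 1) :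
    (star φ ⬝ᵥ ρ.mulVec φ).re ≤ (∑ i, (M i * (Ψ i) ρ).trace).re := by
  classical
  obtain ⟨hCP, _hTN, hTP, hMpsd, hMsum⟩ := hS
  choose mk K hK using hCP
  set P := vecMulVec φ (star φ) with hPdef
  -- the "success observables"
  set F : Fin m → Matrix (Fin d) (Fin d) ℂ :=
    fun i => ∑ j, (K i j)ᴴ * M i * (K i j) with hFdef
  set E : Fin m → Matrix (Fin d) (Fin d) ℂ :=
    fun i => ∑ j, (K i j)ᴴ * (K i j) with hEdef
  -- basic trace identities
  have cyc : ∀ (i : Fin m) (j : Fin (mk i)) (B τ : Matrix (Fin d) (Fin d) ℂ),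
      (B * (K i j * τ * (K i j)ᴴ)).trace = ((K i j)ᴴ * B * K i j * τ).trace := by
    intro i j B τ
    calc (B * (K i j * τ * (K i j)ᴴ)).trace
        = ((B * (K i j * τ)) * (K i j)ᴴ).trace := by simp only [Matrix.mul_assoc]
      _ = ((K i j)ᴴ * (B * (K i j * τ))).trace := by rw [Matrix.trace_mul_comm]
      _ = ((K i j)ᴴ * B * K i j * τ).trace := by
          simp only [Matrix.mul_assoc]
  have hFtr : ∀ (i : Fin m) (τ : Matrix (Fin d) (Fin d) ℂ),
      (M i * (Ψ i) τ).trace = (F i * τ).trace := by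
    intro i τ
    rw [hK i τ, Finset.mul_sum, Matrix.trace_sum, hFdef]
    simp only [Finset.sum_mul, Matrix.trace_sum]
    exact Finset.sum_congr rfl fun j _ => cyc i j (M i) τ
  have hEtr : ∀ (i : Fin m) (τ : Matrix (Fin d) (Fin d) ℂ),
      ((Ψ i) τ).trace = (E i * τ).trace := by
    intro i τ
    rw [hK i τ, Matrix.trace_sum, hEdef]
    simp only [Finset.sum_mul, Matrix.trace_sum]
    refine Finset.sum_congr rfl fun j _ => ?_
    have := cyc i j 1 τ
    simpa using this
  -- the total observable
  set Ftot : Matrix (Fin d) (Fin d) ℂ := ∑ i, F i with hFtotdef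
  have hFtr' : ∀ τ : Matrix (Fin d) (Fin d) ℂ,
      (∑ i, (M i * (Ψ i) τ).trace) = (Ftot * τ).trace := by
    intro τ
    rw [hFtotdef, Finset.sum_mul, Matrix.trace_sum]
    exact Finset.sum_congr rfl fun i _ => hFtr i τ
  -- Ftot is psd
  have hFipsd : ∀ i, (F i).PosSemidef := fun i =>
    aux_psd_sum _ _ fun j _ => (hMpsd i).conjTranspose_mul_mul_same (K i j)
  have hFtotpsd : Ftot.PosSemidef := aux_psd_sum _ _ fun i _ => hFipsd i
  -- ∑ E = 1
  have hEsum : (∑ i, E i) = 1 := by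
    apply aux_eq_one_of_trace_mul
    intro τ
    rw [Finset.sum_mul, Matrix.trace_sum, ← hTP τ]
    exact Finset.sum_congr rfl fun i _ => (hEtr i τ).symm
  -- 1 - Ftot is psd
  have hMle : ∀ i, (1 - M i).PosSemidef := by
    intro i
    have : (1:Matrix (Fin d) (Fin d) ℂ) - M i = ∑ k ∈ Finset.univ.erase i, M k := by
      rw [← hMsum, ← Finset.sum_erase_add Finset.univ M (Finset.mem_univ i)]
      abel
    rw [this]
    exact aux_psd_sum _ _ fun k _ => hMpsd k
  have hEFpsd : ∀ i, (E i - F i).PosSemidef := by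
    intro i
    have heq : E i - F i = ∑ j, (K i j)ᴴ * (1 - M i) * (K i j) := by
      rw [hEdef, hFdef, ← Finset.sum_sub_distrib]
      refine Finset.sum_congr rfl fun j _ => ?_
      rw [Matrix.mul_sub, Matrix.mul_one, Matrix.sub_mul]
    rw [heq]
    exact aux_psd_sum _ _ fun j _ => (hMle i).conjTranspose_mul_mul_same (K i j)
  have h1Fpsd : ((1:Matrix (Fin d) (Fin d) ℂ) - Ftot).PosSemidef := by
    have : (1:Matrix (Fin d) (Fin d) ℂ) - Ftot = ∑ i, (E i - F i) := by
      rw [Finset.sum_sub_distrib, hEsum, hFtotdef]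
    rw [this]
    exact aux_psd_sum _ _ fun i _ => hEFpsd i
  -- Ftot φ = φ
  have hφF : star φ ⬝ᵥ Ftot *ᵥ φ = 1 := by
    have := hFtr' P
    rw [hσ, hPdef, aux_trace_mul_vecMulVec] at this
    exact this.symm
  have hzero : star φ ⬝ᵥ ((1 - Ftot) *ᵥ φ) = 0 := by
    rw [Matrix.sub_mulVec, dotProduct_sub, Matrix.one_mulVec, hφ, hφF, sub_self]
  have hFφ : Ftot *ᵥ φ = φ := by
    have h0 := (h1Fpsd.dotProduct_mulVec_zero_iff φ).mp hzero
    rw [Matrix.sub_mulVec, Matrix.one_mulVec, sub_eq_zero] at h0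
    exact h0.symm
  -- Ftot - P is psd
  have hQFQ : (1 - P) * Ftot * (1 - P) = Ftot - P :=
    aux_key_QFQ hFtotpsd.isHermitian hFφ hφ
  have hFPpsd : (Ftot - P).PosSemidef := by
    rw [← hQFQ]
    have hQherm : ((1:Matrix (Fin d) (Fin d) ℂ) - P)ᴴ = 1 - P := by
      rw [conjTranspose_sub, conjTranspose_one, hPdef, aux_proj_conjTranspose]
    have := hFtotpsd.conjTranspose_mul_mul_same (1 - P)
    rwa [hQherm] at this
  -- conclude
  have hsplit : (Ftot * ρ).trace = ((Ftot - P) * ρ).trace + (P * ρ).trace := by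
    rw [← Matrix.trace_add, ← Matrix.add_mul, sub_add_cancel]
  have hPρ : (P * ρ).trace = star φ ⬝ᵥ ρ.mulVec φ := by
    rw [Matrix.trace_mul_comm, hPdef, aux_trace_mul_vecMulVec]
  have hnn : 0 ≤ (((Ftot - P)) * ρ).trace.re :=
    aux_psd_trace_mul_re_nonneg hFPpsd hρ.1
  rw [hFtr' ρ, hsplit, Complex.add_re, hPρ]
  linarith

end Aux

theorem stmt16 {d : ℕ} (hd : 0 < d)
    (φ : Fin d → ℂ) (hφ : star φ ⬝ᵥ φ = 1)
    (ρ : Matrix (Fin d) (Fin d) ℂ) (hρ : IsDensity ρ) :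
    sInf {r : ℝ | ∃ (m : ℕ)
        (Ψ : Fin m → (Matrix (Fin d) (Fin d) ℂ →ₗ[ℂ] Matrix (Fin d) (Fin d) ℂ))
        (M : Fin m → Matrix (Fin d) (Fin d) ℂ),
        IsStrategy Ψ M ∧
        (∑ i, (M i * (Ψ i) (vecMulVec φ (star φ))).trace) = 1 ∧
        r = (∑ i, (M i * (Ψ i) ρ).trace).re}
      = (star φ ⬝ᵥ ρ.mulVec φ).re := by
  classical
  set P := vecMulVec φ (star φ) with hPdef
  have hPherm : Pᴴ = P := aux_proj_conjTranspose φ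
  have hPP : P * P = P := by
    rw [hPdef, aux_mul_vecMulVec, aux_vecMulVec_mulVec, hφ, one_smul]
  -- the witness strategy
  set C : Fin 2 → Matrix (Fin d) (Fin d) ℂ := ![P, 1 - P] with hCdef
  have hCherm : ∀ i, (C i)ᴴ = C i := by
    intro i
    fin_cases i
    · simpa [hCdef] using hPherm
    · simp [hCdef, conjTranspose_sub, hPherm]
  set Ψ : Fin 2 → (Matrix (Fin d) (Fin d) ℂ →ₗ[ℂ] Matrix (Fin d) (Fin d) ℂ) :=
    fun i => (LinearMap.mulLeft ℂ (C i)).comp (LinearMap.mulRight ℂ (C i)) with hΨdef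
  have hΨapp : ∀ i τ, Ψ i τ = C i * τ * C i := by
    intro i τ
    simp [hΨdef, LinearMap.mulLeft_apply, LinearMap.mulRight_apply, Matrix.mul_assoc]
  set M : Fin 2 → Matrix (Fin d) (Fin d) ℂ := ![1, 0] with hMdef
  -- trace identity for the witness
  have htr : ∀ (i : Fin 2) (τ : Matrix (Fin d) (Fin d) ℂ),
      (Ψ i τ).trace = ((C i * C i) * τ).trace := by
    intro i τ
    rw [hΨapp, Matrix.trace_mul_cycle]
  have hCC : ∀ i, C i * C i = C i := by
    intro i
    fin_cases i
    · simpa [hCdef] using hPP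
    · simp only [hCdef]
      show (1 - P) * (1 - P) = 1 - P
      simp only [Matrix.sub_mul, Matrix.mul_sub, Matrix.one_mul, Matrix.mul_one, hPP]
      abel
  have hΨpsd : ∀ (i : Fin 2) (τ : Matrix (Fin d) (Fin d) ℂ),
      τ.PosSemidef → (Ψ i τ).PosSemidef := by
    intro i τ hτ
    rw [hΨapp]
    have := hτ.mul_mul_conjTranspose_same (C i)
    rwa [hCherm i] at this
  have hΨtrsum : ∀ τ : Matrix (Fin d) (Fin d) ℂ, ∑ i, (Ψ i τ).trace = τ.trace := by
    intro τ
    rw [Fin.sum_univ_two, htr 0 τ, htr 1 τ, hCC 0, hCC 1, ← Matrix.trace_add,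
      ← Matrix.add_mul]
    have : C 0 + C 1 = 1 := by
      simp only [hCdef]
      show P + (1 - P) = 1
      abel
    rw [this, Matrix.one_mul]
  have hstrategy : IsStrategy Ψ M := by
    refine ⟨?_, ?_, hΨtrsum, ?_, ?_⟩
    · intro i
      exact ⟨1, fun _ => C i, fun τ => by
        rw [Fin.sum_univ_one, hCherm i, ← hΨapp]⟩
    · intro i τ hτ
      have h0 : 0 ≤ ((Ψ 0) τ).trace.re := aux_psd_trace_re_nonneg (hΨpsd 0 τ hτ)
      have h1 : 0 ≤ ((Ψ 1) τ).trace.re := aux_psd_trace_re_nonneg (hΨpsd 1 τ hτ)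
      have hsum := hΨtrsum τ
      rw [Fin.sum_univ_two] at hsum
      have := congrArg Complex.re hsum
      rw [Complex.add_re] at this
      fin_cases i <;> simp only [Fin.mk_zero, Fin.mk_one, Fin.isValue] <;> linarith
    · intro i
      fin_cases i
      · simpa [hMdef] using (Matrix.PosDef.one (n := Fin d) (R := ℂ)).posSemidef
      · simpa [hMdef] using (Matrix.PosSemidef.zero (n := Fin d) (R := ℂ))
    · simp [hMdef, Fin.sum_univ_two]
  -- value of the witness on any τ
  have hval : ∀ τ : Matrix (Fin d) (Fin d) ℂ,
      (∑ i, (M i * (Ψ i) τ).trace) = star φ ⬝ᵥ τ.mulVec φ := by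
    intro τ
    rw [Fin.sum_univ_two]
    have hM0 : M 0 = 1 := by simp [hMdef]
    have hM1 : M 1 = 0 := by simp [hMdef]
    rw [hM0, hM1, Matrix.one_mul, Matrix.zero_mul, trace_zero, add_zero, htr 0 τ, hCC 0]
    have hC0 : C 0 = P := by simp [hCdef]
    rw [hC0, Matrix.trace_mul_comm, hPdef, aux_trace_mul_vecMulVec]
  have hσ1 : (∑ i, (M i * (Ψ i) (vecMulVec φ (star φ))).trace) = 1 := by
    rw [hval, ← hPdef]
    have : P *ᵥ φ = φ := by
      rw [hPdef, aux_vecMulVec_mulVec, hφ, one_smul]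
    rw [this, hφ]
  have hmem : (star φ ⬝ᵥ ρ.mulVec φ).re ∈ {r : ℝ | ∃ (m : ℕ)
        (Ψ : Fin m → (Matrix (Fin d) (Fin d) ℂ →ₗ[ℂ] Matrix (Fin d) (Fin d) ℂ))
        (M : Fin m → Matrix (Fin d) (Fin d) ℂ),
        IsStrategy Ψ M ∧
        (∑ i, (M i * (Ψ i) (vecMulVec φ (star φ))).trace) = 1 ∧
        r = (∑ i, (M i * (Ψ i) ρ).trace).re} :=
    ⟨2, Ψ, M, hstrategy, hσ1, by rw [hval ρ]⟩
  apply le_antisymm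
  · apply csInf_le
    · refine ⟨(star φ ⬝ᵥ ρ.mulVec φ).re, ?_⟩
      rintro r ⟨m, Ψ', M', hS', hσ', rfl⟩
      exact aux_lower_bound φ hφ ρ hρ Ψ' M' hS' hσ'
    · exact hmem
  · apply le_csInf ⟨_, hmem⟩
    rintro r ⟨m, Ψ', M', hS', hσ', rfl⟩
    exact aux_lower_bound φ hφ ρ hρ Ψ' M' hS' hσ'
end

section
/- Let complex numbers k^{(n)}_{A,ij} (n finite index, i,j ∈ {1,…,d}) satisfy ∑_l ∑_n conj(k^{(n)}_{A,li}) k^{(n)}_{A,lj} = δ_{ij} (Kraus normalization). If u = (u_{A,ei}) is a unitary matrix such that the vector (∑_n |k^{(n)}_{A,ei}|²)_e majorizes (|u_{A,ei}|²)_e for every i, then ∑_{e,f} ∑_n |k^{(n)}_{A,ei} k^{(n)}_{A,fj}| ≤ ∑_{e,f} |u_{A,ei} u_{A,fj}| for all i, j. -/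
open Matrix BigOperators Finset

/-- `x` majorizes `y`: every partial sum of `y` over a subset is dominated by a
sum of `x` over some subset of the same cardinality (equivalently, top-`k` sums
of `x` dominate those of `y`), and the total sums agree. -/
def Majorizes {d : ℕ} (x y : Fin d → ℝ) : Prop :=
  (∀ A : Finset (Fin d), ∃ B : Finset (Fin d), B.card = A.card ∧
    ∑ e ∈ A, y e ≤ ∑ e ∈ B, x e) ∧
  ∑ e, x e = ∑ e, y e

/-
Cauchy–Schwarz over `n` bounds `∑ n, ‖k n e i * k n f j‖` by `√(x i e) * √(x j f)` with
`x i e = ∑ n, ‖k n e i‖ ^ 2`, so the left side is bounded by, and the right side equals, a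
product of two column sums; it remains that `z ↦ ∑ e, √(z e)` is Schur-concave. For `√t ≤ R`,
`2 √t = ∫₀ᴿ min t r² / r² dr + t / R`; summing over `e` writes `2 ∑ e, √(z e)` as an integral
of the truncated sums `∑ e, min (z e) s` plus `(∑ e, z e) / R`. If `x` majorizes `y`, the totals
agree and truncation at any level `s` removes more mass from `x` than from `y`.
-/

theorem sum_min_le_sum_min_of_majorizes {d : ℕ} {x y : Fin d → ℝ} (h : Majorizes x y) (s : ℝ) :
    ∑ e, min (x e) s ≤ ∑ e, min (y e) s := by
  obtain ⟨hsub, htot⟩ := h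
  set A : Finset (Fin d) := {e | s < y e} with hA
  obtain ⟨B, hBA, hAB⟩ := hsub A
  have hy : ∑ e, min (y e) s = A.card * s + ∑ e ∈ Aᶜ, y e := by
    rw [← sum_add_sum_compl A, sum_congr rfl fun e he => min_eq_right (mem_filter.1 he).2.le,
      sum_congr rfl fun e he => min_eq_left (not_lt.1 (by simpa [hA] using he)),
      sum_const, nsmul_eq_mul]
  have hx : ∑ e, min (x e) s ≤ B.card * s + ∑ e ∈ Bᶜ, x e := by
    rw [← sum_add_sum_compl B, ← nsmul_eq_mul, ← sum_const]
    gcongr <;> simp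
  have := sum_add_sum_compl A y
  have := sum_add_sum_compl B x
  rw [hBA] at hx
  linarith

theorem intervalIntegrable_min_sq_div_sq {t : ℝ} (ht : 0 ≤ t) (a b : ℝ) :
    IntervalIntegrable (fun r => min t (r ^ 2) / r ^ 2) MeasureTheory.volume a b := by
  have hmeas : Measurable fun r : ℝ => min t (r ^ 2) / r ^ 2 := by fun_prop
  refine (intervalIntegrable_const (c := (1 : ℝ))).mono_fun hmeas.aestronglyMeasurable
    (Filter.Eventually.of_forall fun r => ?_)
  simp only [norm_one, Real.norm_of_nonneg (by positivity : 0 ≤ min t (r ^ 2) / r ^ 2)]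
  exact div_le_one_of_le₀ (min_le_right _ _) (sq_nonneg r)

theorem integral_min_sq_div_sq {t R : ℝ} (ht : 0 ≤ t) (htR : √t ≤ R) :
    ∫ r in (0)..R, min t (r ^ 2) / r ^ 2 = 2 * √t - t / R := by
  rw [← intervalIntegral.integral_add_adjacent_intervals
    (intervalIntegrable_min_sq_div_sq ht 0 √t) (intervalIntegrable_min_sq_div_sq ht √t R)]
  have hlow : ∫ r in (0)..√t, min t (r ^ 2) / r ^ 2 = √t := by
    rw [intervalIntegral.integral_congr_ae (g := fun _ => 1), intervalIntegral.integral_const,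
      smul_eq_mul, mul_one, sub_zero]
    refine Filter.Eventually.of_forall fun r hr => ?_
    rw [Set.uIoc_of_le (Real.sqrt_nonneg t)] at hr
    have hr2 : r ^ 2 ≤ t := (Real.le_sqrt hr.1.le ht).1 hr.2
    rw [min_eq_right hr2, div_self (pow_pos hr.1 2).ne']
  have hhigh : ∫ r in √t..R, min t (r ^ 2) / r ^ 2 = √t - t / R := by
    rcases ht.eq_or_lt with rfl | htpos
    · simp [min_eq_left (sq_nonneg _)]
    have hle : ∀ r ∈ Set.uIcc √t R, √t ≤ r := fun r hr => by
      rw [Set.uIcc_of_le htR] at hr; exact hr.1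
    have hpos : ∀ r ∈ Set.uIcc √t R, 0 < r := fun r hr =>
      (Real.sqrt_pos.2 htpos).trans_le (hle r hr)
    rw [intervalIntegral.integral_congr (g := fun r => t / r ^ 2)]
    · rw [intervalIntegral.integral_eq_sub_of_hasDerivAt (f := fun r => -t * r⁻¹)]
      · have h : t * (√t)⁻¹ = √t := by rw [← div_eq_mul_inv, Real.div_sqrt]
        rw [div_eq_mul_inv]
        linear_combination h
      · exact fun r hr => ((hasDerivAt_inv (hpos r hr).ne').const_mul (-t)).congr_deriv
          (by rw [div_eq_mul_inv]; ring)
      · exact (continuousOn_const.div (continuousOn_pow 2)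
          fun r hr => (pow_pos (hpos r hr) 2).ne').intervalIntegrable
    · intro r hr
      have : t ≤ r ^ 2 := (Real.sqrt_le_left (hpos r hr).le).1 (hle r hr)
      simp only [min_eq_left this]
  rw [hlow, hhigh]; ring

theorem sum_sqrt_eq_integral_sum_min_sq_div_sq {ι : Type*} [Fintype ι] {z : ι → ℝ}
    (hz : ∀ e, 0 ≤ z e) {R : ℝ} (hR : ∀ e, √(z e) ≤ R) :
    ∑ e, √(z e) = ((∫ r in (0)..R, ∑ e, min (z e) (r ^ 2) / r ^ 2) + (∑ e, z e) / R) / 2 := by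
  rw [intervalIntegral.integral_finsetSum
    fun e _ => intervalIntegrable_min_sq_div_sq (hz e) 0 R, sum_div, ← sum_add_distrib, sum_div]
  exact sum_congr rfl fun e _ => by rw [integral_min_sq_div_sq (hz e) (hR e)]; ring

theorem sum_sqrt_le_of_majorizes {d : ℕ} {x y : Fin d → ℝ} (hx : ∀ e, 0 ≤ x e)
    (hy : ∀ e, 0 ≤ y e) (h : Majorizes x y) : ∑ e, √(x e) ≤ ∑ e, √(y e) := by
  have hle : ∀ z : Fin d → ℝ, ∀ e, √(z e) ≤ ∑ e, √(z e) := fun z e =>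
    single_le_sum (fun e _ => Real.sqrt_nonneg _) (mem_univ e)
  obtain ⟨R, hR, hxR, hyR⟩ : ∃ R ≥ 0, (∀ e, √(x e) ≤ R) ∧ ∀ e, √(y e) ≤ R :=
    ⟨∑ e, √(x e) + ∑ e, √(y e), by positivity,
      fun e => le_add_of_le_of_nonneg (hle x e) (by positivity),
      fun e => le_add_of_nonneg_of_le (by positivity) (hle y e)⟩
  have hint : ∀ z : Fin d → ℝ, (∀ e, 0 ≤ z e) →
      IntervalIntegrable (fun r => ∑ e, min (z e) (r ^ 2) / r ^ 2) MeasureTheory.volume 0 R :=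
    fun z hz => by
      simpa only [Finset.sum_fn] using
        IntervalIntegrable.sum univ fun e _ => intervalIntegrable_min_sq_div_sq (hz e) 0 R
  rw [sum_sqrt_eq_integral_sum_min_sq_div_sq hx hxR,
    sum_sqrt_eq_integral_sum_min_sq_div_sq hy hyR, h.2]
  gcongr
  refine intervalIntegral.integral_mono_on hR (hint x hx) (hint y hy) fun r _ => ?_
  simp only [← sum_div]
  exact div_le_div_of_nonneg_right (sum_min_le_sum_min_of_majorizes h _) (sq_nonneg r)

theorem stmt18_general {N d : ℕ} (k : Fin N → Fin d → Fin d → ℂ)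
    (u : Matrix (Fin d) (Fin d) ℂ)
    (hmaj : ∀ i : Fin d,
      Majorizes (fun e => ∑ n, ‖k n e i‖ ^ 2)
        (fun e => ‖u e i‖ ^ 2)) :
    ∀ i j : Fin d,
      ∑ e, ∑ f, ∑ n, ‖k n e i * k n f j‖
        ≤ ∑ e, ∑ f, ‖u e i * u f j‖ := by
  intro i j
  have hcol : ∀ i, ∑ e, √(∑ n, ‖k n e i‖ ^ 2) ≤ ∑ e, ‖u e i‖ := fun i => by
    simpa only [Real.sqrt_sq (norm_nonneg _)] using
      sum_sqrt_le_of_majorizes (fun e => by positivity) (fun e => by positivity) (hmaj i)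
  calc ∑ e, ∑ f, ∑ n, ‖k n e i * k n f j‖
      ≤ ∑ e, ∑ f, √(∑ n, ‖k n e i‖ ^ 2) * √(∑ n, ‖k n f j‖ ^ 2) := by
        gcongr with e _ f _
        simpa only [norm_mul] using Real.sum_mul_le_sqrt_mul_sqrt _ _ _
    _ = (∑ e, √(∑ n, ‖k n e i‖ ^ 2)) * ∑ f, √(∑ n, ‖k n f j‖ ^ 2) :=
        (sum_mul_sum _ _ _ _).symm
    _ ≤ (∑ e, ‖u e i‖) * ∑ f, ‖u f j‖ :=
        mul_le_mul (hcol i) (hcol j) (sum_nonneg fun _ _ => Real.sqrt_nonneg _)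
          (sum_nonneg fun _ _ => norm_nonneg _)
    _ = ∑ e, ∑ f, ‖u e i * u f j‖ := by simp only [sum_mul_sum, norm_mul]

theorem stmt18 {N d : ℕ} (k : Fin N → Fin d → Fin d → ℂ)
    (hkraus : ∀ i j : Fin d,
      ∑ e, ∑ n, (starRingEnd ℂ) (k n e i) * k n e j = if i = j then 1 else 0)
    (u : Matrix (Fin d) (Fin d) ℂ) (hu : u ∈ Matrix.unitaryGroup (Fin d) ℂ)
    (hmaj : ∀ i : Fin d,
      Majorizes (fun e => ∑ n, ‖k n e i‖ ^ 2)
        (fun e => ‖u e i‖ ^ 2)) :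
    ∀ i j : Fin d,
      ∑ e, ∑ f, ∑ n, ‖k n e i * k n f j‖
        ≤ ∑ e, ∑ f, ‖u e i * u f j‖ :=
  stmt18_general k u hmaj
end
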